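/- arXiv:math/0002026 — 2 statements merged into one kernel-verified Lean document; each statement's English description precedes it below -/
import Mathlib

section
/- Let π ∈ F_r[T] be irreducible of degree d, and let E_j be the j-th F_r-linear Carlitz polynomial (E_j = e_j/D_j with e_j(x) = ∏_{deg h < j}(x - h), D_j = ∏_{monic, deg = j} h). If j < dn, then E_j(π^n g) ≡ 0 mod π for all g ∈ F_r[T]. -/
/-!
For a prime `p` of `F[X]`, the `p`-adic valuation of a product is the Legendre sum
`∑_{k ≥ 1} #{factors divisible by p ^ k}`. If `deg p ^ k ≤ j`, every residue class modulo `p ^ k`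
has a representative of degree `< j`, so translating by a fixed such representative injects
`{h : p ^ k ∣ X ^ j + h}` into `{h : p ^ k ∣ a - h}`; if `deg p ^ k > j` the first set is empty.
Hence `v_p(D_j) ≤ v_p(e_j(a))` term by term. For `p = π` and `k = n` the first set is empty while
`h = 0` lies in the second, because `π ^ n ∣ a = π ^ n g`; this extra term absorbs the factor `π`.
-/

open Polynomial Finset

section Multiplicity

variable {α : Type*}

open scoped Classical in
theorem emultiplicity_eq_card_filter_pow_dvd [CommMonoid α] {p x : α} {N : ℕ}
    (h : emultiplicity p x ≤ N) : emultiplicity p x = #{k ∈ Icc 1 N | p ^ k ∣ x} := by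
  obtain ⟨m, hm⟩ := ENat.ne_top_iff_exists.1 (ne_top_of_le_ne_top (ENat.natCast_ne_top N) h)
  have hmN : m ≤ N := by exact_mod_cast hm ▸ h
  have : ({k ∈ Icc 1 N | p ^ k ∣ x} : Finset ℕ) = Icc 1 m := by
    ext k
    simp only [mem_filter, mem_Icc, pow_dvd_iff_le_emultiplicity, ← hm, Nat.cast_le]
    omega
  rw [this, Nat.card_Icc, ← hm, Nat.add_sub_cancel]

variable [CommMonoidWithZero α] [IsCancelMulZero α]

open scoped Classical in
theorem Prime.emultiplicity_prod_eq_sum_card_filter {ι : Type*} {p : α} (hp : Prime p)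
    (s : Finset ι) (f : ι → α) {N : ℕ} (h : ∀ i ∈ s, emultiplicity p (f i) ≤ N) :
    emultiplicity p (∏ i ∈ s, f i) = ∑ k ∈ Icc 1 N, #{i ∈ s | p ^ k ∣ f i} := by
  rw [Finset.emultiplicity_prod hp, sum_congr rfl fun i hi =>
    emultiplicity_eq_card_filter_pow_dvd (h i hi)]
  simp only [card_filter]
  push_cast
  exact sum_comm

theorem Prime.emultiplicity_eq_one_of_dvd_irreducible [WfDvdMonoid α] {p q : α} (hp : Prime p)
    (hq : Irreducible q) (hpq : p ∣ q) : emultiplicity p q = 1 := by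
  rw [← emultiplicity_eq_of_associated_right (hp.irreducible.associated_of_dvd hq hpq),
    (FiniteMultiplicity.of_prime_left hp hp.ne_zero).emultiplicity_self]

end Multiplicity

namespace Polynomial

section Semiring

variable {R : Type*} [Semiring R] {j : ℕ}

theorem emultiplicity_le_natDegree [NoZeroDivisors R] {p x : R[X]} (hp : 0 < p.natDegree)
    (hx : x ≠ 0) : emultiplicity p x ≤ x.natDegree := by
  refine Order.le_of_lt_add_one (emultiplicity_lt_iff_not_dvd.2 fun hdvd => ?_)
  have := natDegree_le_of_dvd hdvd hx
  rw [natDegree_pow] at this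
  nlinarith

noncomputable def ofCoeffs (c : Fin j → R) : R[X] :=
  (degreeLT.basis R j).equivFun.symm c

theorem ofCoeffs_eq_sum (c : Fin j → R) : ofCoeffs c = ∑ i, C (c i) * X ^ (i : ℕ) := by
  simp [ofCoeffs, Module.Basis.equivFun_symm_apply, smul_eq_C_mul]

theorem degree_ofCoeffs_lt (c : Fin j → R) : (ofCoeffs c).degree < j :=
  mem_degreeLT.1 (Subtype.property _)

theorem natDegree_ofCoeffs_le (c : Fin j → R) : (ofCoeffs c).natDegree ≤ j :=
  natDegree_le_iff_degree_le.2 (degree_ofCoeffs_lt c).le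

theorem exists_ofCoeffs_eq {p : R[X]} (hp : p.degree < j) : ∃ c : Fin j → R, ofCoeffs c = p :=
  ⟨(degreeLT.basis R j).equivFun ⟨p, mem_degreeLT.2 hp⟩, by
    rw [ofCoeffs, LinearEquiv.symm_apply_apply]⟩

@[simp]
theorem ofCoeffs_zero : ofCoeffs (0 : Fin j → R) = 0 := by
  simp [ofCoeffs]

theorem ofCoeffs_add (c c' : Fin j → R) : ofCoeffs (c + c') = ofCoeffs c + ofCoeffs c' := by
  rw [ofCoeffs, map_add, Submodule.coe_add]
  rfl

theorem monic_X_pow_add_ofCoeffs [Nontrivial R] (c : Fin j → R) : (X ^ j + ofCoeffs c).Monic :=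
  (monic_X_pow j).add_of_left (by simpa using degree_ofCoeffs_lt c)

theorem natDegree_X_pow_add_ofCoeffs [Nontrivial R] (c : Fin j → R) :
    (X ^ j + ofCoeffs c).natDegree = j :=
  (natDegree_add_eq_left_of_degree_lt (by simpa using degree_ofCoeffs_lt c)).trans
    (natDegree_X_pow j)

end Semiring

variable {F : Type*} [Field F] {j : ℕ}

theorem emultiplicity_X_pow_add_ofCoeffs_le {p : F[X]} (hp : 0 < p.natDegree)
    (c : Fin j → F) : emultiplicity p (X ^ j + ofCoeffs c) ≤ j := by
  simpa only [natDegree_X_pow_add_ofCoeffs] using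
    emultiplicity_le_natDegree hp (monic_X_pow_add_ofCoeffs c).ne_zero

theorem emultiplicity_sub_ofCoeffs_le {p a : F[X]} (hp : 0 < p.natDegree) {c : Fin j → F}
    (hc : a - ofCoeffs c ≠ 0) : emultiplicity p (a - ofCoeffs c) ≤ ↑(j + a.natDegree) := by
  refine (emultiplicity_le_natDegree hp hc).trans (Nat.cast_le.2 ?_)
  have := natDegree_sub_le a (ofCoeffs c)
  have := natDegree_ofCoeffs_le c
  omega

variable [Fintype F]

open scoped Classical in
theorem card_filter_dvd_X_pow_add_ofCoeffs_eq_zero {q : F[X]} (hq : j < q.natDegree) :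
    #{c : Fin j → F | q ∣ X ^ j + ofCoeffs c} = 0 := by
  refine card_eq_zero.2 (filter_eq_empty_iff.2 fun c _ hdvd => ?_)
  have := natDegree_le_of_dvd hdvd (monic_X_pow_add_ofCoeffs c).ne_zero
  rw [natDegree_X_pow_add_ofCoeffs] at this
  omega

open scoped Classical in
theorem card_filter_dvd_add_ofCoeffs_le {q : F[X]} (hq0 : q ≠ 0) (hq : q.natDegree ≤ j)
    (u a : F[X]) :
    #{c : Fin j → F | q ∣ u + ofCoeffs c} ≤ #{c : Fin j → F | q ∣ a - ofCoeffs c} := by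
  obtain ⟨r, hr⟩ : ∃ r : Fin j → F, ofCoeffs r = (a + u) % q :=
    exists_ofCoeffs_eq ((degree_mod_lt _ hq0).trans_le
      (degree_le_natDegree.trans (by exact_mod_cast hq)))
  refine card_le_card_of_injOn (· + r) (fun c hc => ?_) (fun c _ c' _ h => add_right_cancel h)
  simp only [coe_filter, mem_univ, true_and, Set.mem_ofPred_eq] at hc ⊢
  have hmod : q ∣ (a + u) - (a + u) % q :=
    ⟨(a + u) / q, by rw [EuclideanDomain.mod_eq_sub_mul_div]; ring⟩
  have : a - ofCoeffs (c + r) = ((a + u) - (a + u) % q) - (u + ofCoeffs c) := by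
    rw [ofCoeffs_add, hr]
    ring
  rw [this]
  exact dvd_sub hmod hc

open scoped Classical in
theorem card_filter_dvd_X_pow_add_ofCoeffs_le {q : F[X]} (hq0 : q ≠ 0) (a : F[X]) :
    #{c : Fin j → F | q ∣ X ^ j + ofCoeffs c} ≤ #{c : Fin j → F | q ∣ a - ofCoeffs c} := by
  rcases le_or_gt q.natDegree j with hq | hq
  · exact card_filter_dvd_add_ofCoeffs_le hq0 hq _ a
  · rw [card_filter_dvd_X_pow_add_ofCoeffs_eq_zero hq]
    exact Nat.zero_le _

open scoped Classical in
theorem sum_card_filter_dvd_X_pow_add_ofCoeffs_lt {p a : F[X]} (hp : p ≠ 0) {n N : ℕ}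
    (hn : j < n * p.natDegree) (hpa : p ^ n ∣ a) (hnN : n ∈ Icc 1 N) :
    ∑ k ∈ Icc 1 N, #{c : Fin j → F | p ^ k ∣ X ^ j + ofCoeffs c} <
      ∑ k ∈ Icc 1 N, #{c : Fin j → F | p ^ k ∣ a - ofCoeffs c} := by
  refine sum_lt_sum (fun k _ => card_filter_dvd_X_pow_add_ofCoeffs_le (pow_ne_zero k hp) a)
    ⟨n, hnN, ?_⟩
  rw [card_filter_dvd_X_pow_add_ofCoeffs_eq_zero (by rwa [natDegree_pow])]
  exact card_pos.2 ⟨0, mem_filter.2 ⟨mem_univ 0, by rwa [ofCoeffs_zero, sub_zero]⟩⟩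

end Polynomial

/-- for π irreducible of degree d in F_r[T] and j < dn,
E_j(π^n g) ≡ 0 mod π; equivalently π·D_j divides e_j(π^n g), where
e_j(x) = ∏_(deg h < j) (x - h) and D_j = ∏_(monic, deg = j) h, with polynomials
of degree < j (resp. monic of degree j) parametrized by coefficient tuples. -/
theorem stmt_13 (𝔽 : Type*) [Field 𝔽] [Fintype 𝔽] (π : Polynomial 𝔽)
    (hπ : Irreducible π) (d : ℕ) (hd : π.natDegree = d)
    (n j : ℕ) (hj : j < d * n) (g : Polynomial 𝔽) :
    π * (∏ c : Fin j → 𝔽, ((Polynomial.X : Polynomial 𝔽) ^ j +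
          ∑ i : Fin j, Polynomial.C (c i) * Polynomial.X ^ (i : ℕ))) ∣
      ∏ c : Fin j → 𝔽, (π ^ n * g -
          ∑ i : Fin j, Polynomial.C (c i) * Polynomial.X ^ (i : ℕ)) := by
  classical
  simp_rw [← ofCoeffs_eq_sum]
  set a := π ^ n * g
  have hD : π * ∏ c : Fin j → 𝔽, (X ^ j + ofCoeffs c) ≠ 0 :=
    mul_ne_zero hπ.ne_zero (prod_ne_zero_iff.2 fun c _ => (monic_X_pow_add_ofCoeffs c).ne_zero)
  refine (UniqueFactorizationMonoid.dvd_iff_emultiplicity_le hD).2 fun p hp => ?_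
  by_cases he : ∏ c : Fin j → 𝔽, (a - ofCoeffs c) = 0
  · simp [he]
  have hpos : 0 < p.natDegree := hp.irreducible.natDegree_pos
  set N := n + j + a.natDegree
  rw [emultiplicity_mul hp,
    hp.emultiplicity_prod_eq_sum_card_filter _ _ (N := N) fun c _ =>
      (emultiplicity_X_pow_add_ofCoeffs_le hpos c).trans (by norm_cast; omega),
    hp.emultiplicity_prod_eq_sum_card_filter _ _ (N := N) fun c _ =>
      (emultiplicity_sub_ofCoeffs_le hpos (prod_ne_zero_iff.1 he c (mem_univ c))).trans
        (by norm_cast; omega)]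
  by_cases hpπ : p ∣ π
  · have hdeg : p.natDegree = d := hd ▸ natDegree_eq_of_degree_eq
      (degree_eq_degree_of_associated (hp.irreducible.associated_of_dvd hπ hpπ))
    have hn : n ∈ Icc 1 N := mem_Icc.2 ⟨Nat.pos_of_ne_zero (by rintro rfl; simp at hj), by omega⟩
    have hlt := sum_card_filter_dvd_X_pow_add_ofCoeffs_lt hp.ne_zero (by rwa [hdeg, mul_comm])
      ((pow_dvd_pow_of_dvd hpπ n).mul_right g) hn
    rw [hp.emultiplicity_eq_one_of_dvd_irreducible hπ hpπ, add_comm]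
    exact_mod_cast hlt
  · rw [emultiplicity_eq_zero.2 hpπ, zero_add]
    exact_mod_cast sum_le_sum fun k _ =>
      card_filter_dvd_X_pow_add_ofCoeffs_le (pow_ne_zero k hp.ne_zero) a
end

section
/- Let F be a field with a single variable polynomial ring F[T] and let f ∈ F[T]. For all n ≥ 1 and j ≥ 1, the Leibniz rule gives D_j(f^n) = Σ_{i=1}^{j} C(n,i) f^{n-i} Σ_{k_1+...+k_i = j, all k_m ≥ 1} D_{k_1}(f) ⋯ D_{k_i}(f), where C(n,i) is the binomial coefficient in F. -/
/-!
Taylor expansion in a second variable, `f(T + X) = ∑ⱼ Dⱼ(f) Xʲ` in `F[T][X]`, is a ring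
homomorphism, so `Dⱼ(fⁿ)` is the `Xʲ`-coefficient of `(f + g)ⁿ` with `g = f(T + X) - f`.
Since `g` has no constant term, the binomial expansion only contributes `gⁱ` with `1 ≤ i ≤ j`,
and the `Xʲ`-coefficient of `gⁱ` is the sum of `∏ D_{kₘ}(f)` over the compositions
`k₁ + ⋯ + kᵢ = j` into positive parts.
-/

open Polynomial Finset

namespace Finset.Nat

theorem sum_antidiagonalTuple_succ {M : Type*} [AddCommMonoid M] {k n : ℕ}
    (g : (Fin (k + 1) → ℕ) → M) :
    ∑ t ∈ antidiagonalTuple (k + 1) n, g t =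
      ∑ p ∈ antidiagonal n, ∑ s ∈ antidiagonalTuple k p.2, g (Fin.cons p.1 s) := by
  rw [sum_sigma']
  refine sum_nbij' (fun t => ⟨(t 0, n - t 0), Fin.tail t⟩) (fun p => Fin.cons p.1.1 p.2)
    ?_ ?_ (fun t _ => Fin.cons_self_tail t) ?_ (fun t _ => by simp only [Fin.cons_self_tail])
  · intro t ht
    simp only [mem_sigma, HasAntidiagonal.mem_antidiagonal, mem_antidiagonalTuple,
      Fin.sum_univ_succ, Fin.tail] at ht ⊢
    omega
  · rintro ⟨⟨a, b⟩, s⟩ hp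
    simp only [mem_sigma, HasAntidiagonal.mem_antidiagonal, mem_antidiagonalTuple,
      Fin.sum_univ_succ, Fin.cons_zero, Fin.cons_succ] at hp ⊢
    omega
  · rintro ⟨⟨a, b⟩, s⟩ hp
    simp only [mem_sigma, HasAntidiagonal.mem_antidiagonal, mem_antidiagonalTuple] at hp
    obtain rfl : b = n - a := by omega
    simp only [Fin.cons_zero, Fin.tail_cons]

end Finset.Nat

namespace Polynomial

theorem hasseDeriv_map {R S : Type*} [Semiring R] [Semiring S] (φ : R →+* S) (f : R[X])
    (k : ℕ) : hasseDeriv k (f.map φ) = (hasseDeriv k f).map φ := by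
  ext n
  simp [hasseDeriv_coeff]

section CommSemiring

variable {R : Type*} [CommSemiring R]

theorem coeff_taylor_X_map_C (f : R[X]) (k : ℕ) :
    (taylor (X : R[X]) (f.map C)).coeff k = hasseDeriv k f := by
  rw [taylor_coeff, hasseDeriv_map, eval_map, eval₂_C_X]

theorem coeff_pow_eq_sum_antidiagonalTuple (p : R[X]) (k n : ℕ) :
    (p ^ k).coeff n = ∑ t ∈ Nat.antidiagonalTuple k n, ∏ m, p.coeff (t m) := by
  induction k generalizing n with
  | zero =>
    cases n <;> simp [Nat.antidiagonalTuple_zero_zero, Nat.antidiagonalTuple_zero_succ, coeff_one]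
  | succ k ih =>
    simp only [pow_succ', coeff_mul, Nat.sum_antidiagonalTuple_succ, ih, mul_sum,
      Fin.prod_univ_succ, Fin.cons_zero, Fin.cons_succ]

variable {p : R[X]}

theorem coeff_pow_eq_sum_pos_antidiagonalTuple (hp : p.coeff 0 = 0) (k n : ℕ) :
    (p ^ k).coeff n =
      ∑ t ∈ (Nat.antidiagonalTuple k n).filter (fun t => ∀ m, 0 < t m),
        ∏ m, p.coeff (t m) := by
  rw [coeff_pow_eq_sum_antidiagonalTuple, sum_filter]
  refine sum_congr rfl fun t _ => ?_
  split_ifs with hpos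
  · rfl
  · obtain ⟨m, hm⟩ := not_forall.mp hpos
    exact prod_eq_zero (mem_univ m) (by rw [Nat.eq_zero_of_not_pos hm, hp])

theorem coeff_pow_eq_zero_of_lt (hp : p.coeff 0 = 0) {k n : ℕ} (h : n < k) :
    (p ^ k).coeff n = 0 :=
  X_pow_dvd_iff.mp (pow_dvd_pow_of_dvd (X_dvd_iff.mpr hp) k) n h

theorem coeff_add_C_pow_eq_sum_Icc (hp : p.coeff 0 = 0) (a : R) (n : ℕ) {j : ℕ} (hj : 1 ≤ j) :
    ((p + C a) ^ n).coeff j =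
      ∑ i ∈ Icc 1 j, (n.choose i : R) * a ^ (n - i) * (p ^ i).coeff j := by
  set term : ℕ → R := fun i => (n.choose i : R) * a ^ (n - i) * (p ^ i).coeff j
  have hterm (i : ℕ) : (p ^ i * C a ^ (n - i) * (n.choose i : R[X])).coeff j = term i := by
    rw [← C_pow, ← C_eq_natCast, mul_assoc, ← C_mul, coeff_mul_C]
    ring
  rw [add_pow, finsetSum_coeff]
  simp only [hterm]
  calc ∑ i ∈ range (n + 1), term i = ∑ i ∈ range (n + 1) ∩ Icc 1 j, term i := by
        refine (sum_subset inter_subset_left fun i hi hi' => ?_).symm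
        simp only [mem_inter, mem_Icc, hi, true_and, not_and_or, not_le] at hi'
        dsimp only [term]
        rcases hi' with hi0 | hji
        · rw [Nat.lt_one_iff.mp hi0, pow_zero, coeff_one, if_neg (by omega), mul_zero]
        · rw [coeff_pow_eq_zero_of_lt hp hji, mul_zero]
    _ = ∑ i ∈ Icc 1 j, term i := by
        refine sum_subset inter_subset_right fun i hi hi' => ?_
        simp only [mem_inter, mem_range, hi, and_true, not_lt] at hi'
        dsimp only [term]
        rw [Nat.choose_eq_zero_of_lt (by omega), Nat.cast_zero, zero_mul, zero_mul]

end CommSemiring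

end Polynomial

theorem stmt_18_general (F : Type*) [Field F] (f : Polynomial F) (n j : ℕ)
    (hj : 1 ≤ j) :
    Polynomial.hasseDeriv j (f ^ n) =
      ∑ i ∈ Finset.Icc 1 j,
        (Nat.choose n i : Polynomial F) * f ^ (n - i) *
          ∑ k ∈ (Finset.Nat.antidiagonalTuple i j).filter (fun k => ∀ m, 0 < k m),
            ∏ m : Fin i, Polynomial.hasseDeriv (k m) f := by
  set g : F[X][X] := taylor X (f.map C) - C f
  have hg (k : ℕ) : g.coeff k = if k = 0 then 0 else hasseDeriv k f := by
    simp only [g, coeff_sub, coeff_taylor_X_map_C, coeff_C]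
    rcases k with _ | k <;> simp
  have hg0 : g.coeff 0 = 0 := by rw [hg, if_pos rfl]
  rw [← coeff_taylor_X_map_C, Polynomial.map_pow, taylor_pow,
    ← sub_add_cancel (taylor _ _) (C f), coeff_add_C_pow_eq_sum_Icc hg0 _ _ hj]
  refine sum_congr rfl fun i _ => ?_
  rw [coeff_pow_eq_sum_pos_antidiagonalTuple hg0]
  congr 1
  refine sum_congr rfl fun t ht => prod_congr rfl fun m _ => ?_
  rw [hg, if_neg ((mem_filter.mp ht).2 m).ne']

/-- the multi-factor Leibniz rule for powers:
D_j(f^n) = Σ_{i=1}^{j} C(n,i) f^(n-i) Σ_{k_1+...+k_i = j, k_m ≥ 1} D_{k_1}(f)⋯D_{k_i}(f). -/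
theorem stmt_18 (F : Type*) [Field F] (f : Polynomial F) (n j : ℕ)
    (hn : 1 ≤ n) (hj : 1 ≤ j) :
    Polynomial.hasseDeriv j (f ^ n) =
      ∑ i ∈ Finset.Icc 1 j,
        (Nat.choose n i : Polynomial F) * f ^ (n - i) *
          ∑ k ∈ (Finset.Nat.antidiagonalTuple i j).filter (fun k => ∀ m, 0 < k m),
            ∏ m : Fin i, Polynomial.hasseDeriv (k m) f :=
  stmt_18_general F f n j hj
end
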